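/- arXiv:2602.18244 — 2 statements merged into one kernel-verified Lean document; each statement's English description precedes it below -/
import Mathlib

section
/- If σ is a signature on the complete graph K₅ such that every cycle of length five in (K₅,σ) is negative, then χ'(K₅,σ) = 5. -/
open scoped Classical

/-- The color set `M_q`: for `q = 2r`, `{±1, …, ±r}`; for `q = 2r+1`, `{0, ±1, …, ±r}`. -/
def colorSet (q : ℕ) : Set ℤ :=
  {c : ℤ | c.natAbs ≤ q / 2 ∧ (Even q → c ≠ 0)}

/-- A proper `q`-edge coloring of the signed graph `(G, σ)`, given as an assignment
`γ v w` of a color to the incidence `(v, vw)`. -/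
def IsProperSignedEdgeColoring {V : Type*} (G : SimpleGraph V)
    (σ : Sym2 V → ℤˣ) (q : ℕ) (γ : V → V → ℤ) : Prop :=
  (∀ ⦃v w : V⦄, G.Adj v w → γ v w ∈ colorSet q) ∧
  (∀ ⦃v w : V⦄, G.Adj v w → γ v w = (-(σ s(v, w) : ℤ)) * γ w v) ∧
  (∀ ⦃v w₁ w₂ : V⦄, G.Adj v w₁ → G.Adj v w₂ → w₁ ≠ w₂ → γ v w₁ ≠ γ v w₂)

/-- The chromatic index of a signed graph: the least `q` admitting a proper
`q`-edge coloring. -/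
noncomputable def signedChromaticIndex {V : Type*} (G : SimpleGraph V)
    (σ : Sym2 V → ℤˣ) : ℕ :=
  sInf {q : ℕ | ∃ γ : V → V → ℤ, IsProperSignedEdgeColoring G σ q γ}

/- ### Auxiliary lemmas -/

open SimpleGraph

/-- Generic five-cycle instantiation of the negativity hypothesis. -/
lemma aux_c5_neg (σ : Sym2 (Fin 5) → ℤˣ)
    (hneg : ∀ (v : Fin 5) (w : (⊤ : SimpleGraph (Fin 5)).Walk v v),
      w.IsCycle → w.length = 5 → (w.edges.map σ).prod = -1)
    (a b c d e : Fin 5) (hab : a ≠ b) (hac : a ≠ c) (had : a ≠ d) (hae : a ≠ e)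
    (hbc : b ≠ c) (hbd : b ≠ d) (hbe : b ≠ e) (hcd : c ≠ d) (hce : c ≠ e) (hde : d ≠ e) :
    σ s(a,b) * σ s(b,c) * σ s(c,d) * σ s(d,e) * σ s(e,a) = -1 := by
  let W : (⊤ : SimpleGraph (Fin 5)).Walk a a :=
    .cons (by simpa using hab) (.cons (by simpa using hbc) (.cons (by simpa using hcd)
      (.cons (by simpa using hde) (.cons (by simpa using hae.symm) .nil))))
  have hed : W.edges = [s(a,b), s(b,c), s(c,d), s(d,e), s(e,a)] := rfl
  have hcyc : W.IsCycle := by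
    rw [Walk.isCycle_def, Walk.isTrail_def, hed]
    refine ⟨?_, by simp [W], ?_⟩
    · simp only [List.nodup_cons, List.mem_cons, List.mem_singleton, List.not_mem_nil,
        or_false, Sym2.eq_iff, List.nodup_nil, and_true, not_or]
      refine ⟨⟨?_,?_,?_,?_⟩,⟨?_,?_,?_⟩,⟨?_,?_⟩,?_⟩ <;> tauto
    · have hsup : W.support = [a, b, c, d, e, a] := rfl
      rw [hsup]
      simp only [List.tail_cons, List.nodup_cons, List.mem_cons, List.mem_singleton,
        List.not_mem_nil, or_false, List.nodup_nil, and_true, not_or]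
      tauto
  have h := hneg a W hcyc rfl
  rw [hed] at h
  simpa [mul_assoc] using h

set_option maxRecDepth 10000 in
set_option synthInstance.maxSize 5000 in
set_option synthInstance.maxHeartbeats 1000000 in
/-- The combinatorial core: seven five-cycle equations force the triangle relations. -/
lemma aux_key : ∀ x01 x02 x03 x04 x12 x13 x14 x23 x24 x34 : ℤˣ,
    x01*x12*x23*x34*x04 = -1 → x01*x12*x24*x34*x03 = -1 →
    x01*x13*x23*x24*x04 = -1 → x01*x13*x34*x24*x02 = -1 →
    x01*x14*x24*x23*x03 = -1 → x01*x14*x34*x23*x02 = -1 →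
    x02*x12*x13*x34*x04 = -1 →
    x12 = -(x01*x02) ∧ x13 = -(x01*x03) ∧ x14 = -(x01*x04) ∧
    x23 = -(x02*x03) ∧ x24 = -(x02*x04) ∧ x34 = -(x03*x04) := by decide

set_option maxRecDepth 100000 in
/-- Every signature with all five-cycles negative is a switching of the all-negative one. -/
lemma aux_eps (σ : Sym2 (Fin 5) → ℤˣ)
    (hneg : ∀ (v : Fin 5) (w : (⊤ : SimpleGraph (Fin 5)).Walk v v),
      w.IsCycle → w.length = 5 → (w.edges.map σ).prod = -1) :
    ∃ ε : Fin 5 → ℤˣ, ∀ v w : Fin 5, v ≠ w → σ s(v,w) = -(ε v * ε w) := by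
  have c5 := aux_c5_neg σ hneg
  have h1 := c5 0 1 2 3 4 (by decide) (by decide) (by decide) (by decide) (by decide)
      (by decide) (by decide) (by decide) (by decide) (by decide)
  have h2 := c5 0 1 2 4 3 (by decide) (by decide) (by decide) (by decide) (by decide)
      (by decide) (by decide) (by decide) (by decide) (by decide)
  have h3 := c5 0 1 3 2 4 (by decide) (by decide) (by decide) (by decide) (by decide)
      (by decide) (by decide) (by decide) (by decide) (by decide)
  have h4 := c5 0 1 3 4 2 (by decide) (by decide) (by decide) (by decide) (by decide)
      (by decide) (by decide) (by decide) (by decide) (by decide)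
  have h5 := c5 0 1 4 2 3 (by decide) (by decide) (by decide) (by decide) (by decide)
      (by decide) (by decide) (by decide) (by decide) (by decide)
  have h6 := c5 0 1 4 3 2 (by decide) (by decide) (by decide) (by decide) (by decide)
      (by decide) (by decide) (by decide) (by decide) (by decide)
  have h7 := c5 0 2 1 3 4 (by decide) (by decide) (by decide) (by decide) (by decide)
      (by decide) (by decide) (by decide) (by decide) (by decide)
  rw [show s((4:Fin 5),(0:Fin 5)) = s(0,4) from Sym2.eq_swap] at h1 h3 h7
  rw [show s((4:Fin 5),(3:Fin 5)) = s(3,4) from Sym2.eq_swap,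
      show s((3:Fin 5),(0:Fin 5)) = s(0,3) from Sym2.eq_swap] at h2
  rw [show s((3:Fin 5),(2:Fin 5)) = s(2,3) from Sym2.eq_swap] at h3
  rw [show s((4:Fin 5),(2:Fin 5)) = s(2,4) from Sym2.eq_swap,
      show s((2:Fin 5),(0:Fin 5)) = s(0,2) from Sym2.eq_swap] at h4
  rw [show s((4:Fin 5),(2:Fin 5)) = s(2,4) from Sym2.eq_swap,
      show s((3:Fin 5),(0:Fin 5)) = s(0,3) from Sym2.eq_swap] at h5
  rw [show s((4:Fin 5),(3:Fin 5)) = s(3,4) from Sym2.eq_swap,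
      show s((3:Fin 5),(2:Fin 5)) = s(2,3) from Sym2.eq_swap,
      show s((2:Fin 5),(0:Fin 5)) = s(0,2) from Sym2.eq_swap] at h6
  rw [show s((2:Fin 5),(1:Fin 5)) = s(1,2) from Sym2.eq_swap] at h7
  obtain ⟨k12, k13, k14, k23, k24, k34⟩ :=
    aux_key (σ s(0,1)) (σ s(0,2)) (σ s(0,3)) (σ s(0,4)) (σ s(1,2)) (σ s(1,3)) (σ s(1,4))
      (σ s(2,3)) (σ s(2,4)) (σ s(3,4)) h1 h2 h3 h4 h5 h6 h7
  refine ⟨![1, -σ s(0,1), -σ s(0,2), -σ s(0,3), -σ s(0,4)], ?_⟩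
  have swap : ∀ v w : Fin 5,
      σ s(v,w) = -(![1, -σ s(0,1), -σ s(0,2), -σ s(0,3), -σ s(0,4)] v *
        ![1, -σ s(0,1), -σ s(0,2), -σ s(0,3), -σ s(0,4)] w) →
      σ s(w,v) = -(![1, -σ s(0,1), -σ s(0,2), -σ s(0,3), -σ s(0,4)] w *
        ![1, -σ s(0,1), -σ s(0,2), -σ s(0,3), -σ s(0,4)] v) := by
    intro v w h
    rw [Sym2.eq_swap, mul_comm]; exact h
  have g01 : σ s((0:Fin 5),1) = -((1 : ℤˣ) * (-σ s(0,1))) := by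
    rw [mul_neg, neg_neg, one_mul]
  have g02 : σ s((0:Fin 5),2) = -((1 : ℤˣ) * (-σ s(0,2))) := by
    rw [mul_neg, neg_neg, one_mul]
  have g03 : σ s((0:Fin 5),3) = -((1 : ℤˣ) * (-σ s(0,3))) := by
    rw [mul_neg, neg_neg, one_mul]
  have g04 : σ s((0:Fin 5),4) = -((1 : ℤˣ) * (-σ s(0,4))) := by
    rw [mul_neg, neg_neg, one_mul]
  have g12 : σ s((1:Fin 5),2) = -((-σ s(0,1)) * (-σ s(0,2))) := by rw [neg_mul_neg]; exact k12
  have g13 : σ s((1:Fin 5),3) = -((-σ s(0,1)) * (-σ s(0,3))) := by rw [neg_mul_neg]; exact k13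
  have g14 : σ s((1:Fin 5),4) = -((-σ s(0,1)) * (-σ s(0,4))) := by rw [neg_mul_neg]; exact k14
  have g23 : σ s((2:Fin 5),3) = -((-σ s(0,2)) * (-σ s(0,3))) := by rw [neg_mul_neg]; exact k23
  have g24 : σ s((2:Fin 5),4) = -((-σ s(0,2)) * (-σ s(0,4))) := by rw [neg_mul_neg]; exact k24
  have g34 : σ s((3:Fin 5),4) = -((-σ s(0,3)) * (-σ s(0,4))) := by rw [neg_mul_neg]; exact k34
  intro v w hvw
  fin_cases v <;> fin_cases w <;>
    first
      | exact absurd rfl hvw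
      | exact g01 | exact g02 | exact g03 | exact g04 | exact g12 | exact g13
      | exact g14 | exact g23 | exact g24 | exact g34
      | exact swap _ _ g01 | exact swap _ _ g02 | exact swap _ _ g03 | exact swap _ _ g04
      | exact swap _ _ g12 | exact swap _ _ g13 | exact swap _ _ g14
      | exact swap _ _ g23 | exact swap _ _ g24 | exact swap _ _ g34

/-- The symmetric edge coloring of `K₅` by `{0, ±1, ±2}`. -/
def gcol : Fin 5 → ℤ := ![0, 1, 2, -2, -1]

lemma gcol_inj : ∀ x y : Fin 5, gcol x = gcol y → x = y := by decide

lemma gcol_natAbs : ∀ x : Fin 5, (gcol x).natAbs ≤ 2 := by decide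

/-- There is no fixed-point-free involution of `Fin 5`. -/
lemma aux_no_invol (f : Fin 5 → Fin 5) (hinv : ∀ v, f (f v) = v)
    (hfix : ∀ v, f v ≠ v) : False := by
  classical
  set s := Finset.univ.filter (fun v : Fin 5 => v < f v) with hs
  set t := Finset.univ.filter (fun v : Fin 5 => ¬ v < f v) with ht
  have hcard : s.card + t.card = 5 := by
    rw [hs, ht, Finset.card_filter_add_card_filter_not]
    simp
  have hbij : s.card = t.card := by
    apply Finset.card_bij (fun a _ => f a)
    · intro a ha
      simp only [hs, Finset.mem_filter, Finset.mem_univ, true_and] at ha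
      simp only [ht, Finset.mem_filter, Finset.mem_univ, true_and]
      rw [hinv a]
      exact not_lt.mpr ha.le
    · intro a _ b _ h
      have h2 := congrArg f h
      rwa [hinv, hinv] at h2
    · intro b hb
      refine ⟨f b, ?_, hinv b⟩
      simp only [ht, Finset.mem_filter, Finset.mem_univ, true_and] at hb
      simp only [hs, Finset.mem_filter, Finset.mem_univ, true_and]
      rw [hinv b]
      exact lt_of_le_of_ne (not_lt.mp hb) (hfix b)
  omega

set_option maxRecDepth 100000 in
lemma aux_others : ∀ v : Fin 5, ∃ a b c d : Fin 5, a ≠ v ∧ b ≠ v ∧ c ≠ v ∧ d ≠ v ∧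
    a ≠ b ∧ a ≠ c ∧ a ≠ d ∧ b ≠ c ∧ b ≠ d ∧ c ≠ d := by decide

/-- If every cycle of length five in `(K₅, σ)` is negative, then
`χ'(K₅, σ) = 5`. -/
theorem chromaticIndex_signed_K5_all_C5_negative (σ : Sym2 (Fin 5) → ℤˣ)
    (hneg : ∀ (v : Fin 5) (w : (⊤ : SimpleGraph (Fin 5)).Walk v v),
      w.IsCycle → w.length = 5 → (w.edges.map σ).prod = -1) :
    signedChromaticIndex (⊤ : SimpleGraph (Fin 5)) σ = 5 := by
  obtain ⟨ε, hε⟩ := aux_eps σ hneg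
  -- the proper 5-coloring
  have hproper5 : IsProperSignedEdgeColoring (⊤ : SimpleGraph (Fin 5)) σ 5
      (fun v w => (ε v : ℤ) * gcol (v + w)) := by
    refine ⟨?_, ?_, ?_⟩
    · intro v w _
      constructor
      · have : ((ε v : ℤ) * gcol (v + w)).natAbs = (gcol (v + w)).natAbs := by
          rcases Int.units_eq_one_or (ε v) with h | h <;> rw [h] <;> simp
        rw [this]
        exact gcol_natAbs _
      · intro h
        exact absurd h (by decide)
    · intro v w hadj
      have hvw : v ≠ w := by simpa using hadj
      show (ε v : ℤ) * gcol (v + w) = -(σ s(v,w) : ℤ) * ((ε w : ℤ) * gcol (w + v))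
      rw [hε v w hvw, add_comm w v]
      rcases Int.units_eq_one_or (ε v) with h1 | h1 <;>
        rcases Int.units_eq_one_or (ε w) with h2 | h2 <;> rw [h1, h2] <;> simp
    · intro v w₁ w₂ _ _ hne heq
      have h1 : gcol (v + w₁) = gcol (v + w₂) :=
        mul_left_cancel₀ (by exact_mod_cast (ε v).ne_zero) heq
      exact hne (add_left_cancel (gcol_inj _ _ h1))
  have h5mem : 5 ∈ {q : ℕ | ∃ γ : Fin 5 → Fin 5 → ℤ,
      IsProperSignedEdgeColoring (⊤ : SimpleGraph (Fin 5)) σ q γ} :=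
    ⟨_, hproper5⟩
  refine le_antisymm (Nat.sInf_le h5mem) (le_csInf ⟨5, h5mem⟩ ?_)
  rintro q ⟨γ, hmem, hsym, hdist⟩
  by_contra hlt
  push_neg at hlt
  have hq4 : q ≤ 4 := by omega
  have adj : ∀ {v w : Fin 5}, v ≠ w → (⊤ : SimpleGraph (Fin 5)).Adj v w := by
    intro v w h; simpa using h
  rcases Nat.lt_or_ge q 4 with hq3 | hq4'
  · -- q ≤ 3 : only three colors available, but vertex 0 has four neighbors
    have hbound : ∀ i : Fin 5, (0 : Fin 5) ≠ i → (γ 0 i).natAbs ≤ 1 := by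
      intro i hi
      have := (hmem (adj hi)).1
      omega
    have b1 := hbound 1 (by decide)
    have b2 := hbound 2 (by decide)
    have b3 := hbound 3 (by decide)
    have b4 := hbound 4 (by decide)
    have d12 := hdist (adj (by decide : (0:Fin 5) ≠ 1)) (adj (by decide : (0:Fin 5) ≠ 2)) (by decide)
    have d13 := hdist (adj (by decide : (0:Fin 5) ≠ 1)) (adj (by decide : (0:Fin 5) ≠ 3)) (by decide)
    have d14 := hdist (adj (by decide : (0:Fin 5) ≠ 1)) (adj (by decide : (0:Fin 5) ≠ 4)) (by decide)
    have d23 := hdist (adj (by decide : (0:Fin 5) ≠ 2)) (adj (by decide : (0:Fin 5) ≠ 3)) (by decide)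
    have d24 := hdist (adj (by decide : (0:Fin 5) ≠ 2)) (adj (by decide : (0:Fin 5) ≠ 4)) (by decide)
    have d34 := hdist (adj (by decide : (0:Fin 5) ≠ 3)) (adj (by decide : (0:Fin 5) ≠ 4)) (by decide)
    omega
  · -- q = 4 : a perfect matching on five vertices would be needed
    have hq : q = 4 := by omega
    subst hq
    set γ' : Fin 5 → Fin 5 → ℤ := fun v w => (ε v : ℤ) * γ v w with hγ'
    have hsym' : ∀ v w : Fin 5, v ≠ w → γ' v w = γ' w v := by
      intro v w hvw
      have h := hsym (adj hvw)
      have hσ : (-(σ s(v, w) : ℤ)) = (ε v : ℤ) * (ε w : ℤ) := by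
        rw [hε v w hvw]; simp
      show (ε v : ℤ) * γ v w = (ε w : ℤ) * γ w v
      rw [h, hσ]
      rcases Int.units_eq_one_or (ε v) with h1 | h1 <;>
        rcases Int.units_eq_one_or (ε w) with h2 | h2 <;> rw [h1, h2] <;> simp
    have hval : ∀ v w : Fin 5, v ≠ w → (γ' v w).natAbs ≤ 2 ∧ γ' v w ≠ 0 := by
      intro v w hvw
      obtain ⟨ha, hz⟩ := hmem (adj hvw)
      have hz' := hz (by decide)
      constructor
      · simp only [hγ']
        rcases Int.units_eq_one_or (ε v) with h1 | h1 <;> rw [h1] <;> simpa using ha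
      · simp only [hγ']
        exact mul_ne_zero (by exact_mod_cast (ε v).ne_zero) hz'
    have hinj : ∀ v w₁ w₂ : Fin 5, v ≠ w₁ → v ≠ w₂ → w₁ ≠ w₂ → γ' v w₁ ≠ γ' v w₂ := by
      intro v w₁ w₂ h1 h2 hne heq
      have : γ v w₁ = γ v w₂ :=
        mul_left_cancel₀ (by exact_mod_cast (ε v).ne_zero) heq
      exact hdist (adj h1) (adj h2) hne this
    have hex : ∀ v : Fin 5, ∃ w : Fin 5, w ≠ v ∧ γ' v w = 1 := by
      intro v
      by_contra hno
      push_neg at hno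
      obtain ⟨a, b, c, d, hav, hbv, hcv, hdv, hab, hac, had, hbc, hbd, hcd⟩ := aux_others v
      obtain ⟨na, za⟩ := hval v a (Ne.symm hav)
      obtain ⟨nb, zb⟩ := hval v b (Ne.symm hbv)
      obtain ⟨nc, zc⟩ := hval v c (Ne.symm hcv)
      obtain ⟨nd, zd⟩ := hval v d (Ne.symm hdv)
      have oa := hno a hav
      have ob := hno b hbv
      have oc := hno c hcv
      have od := hno d hdv
      have iab := hinj v a b (Ne.symm hav) (Ne.symm hbv) hab
      have iac := hinj v a c (Ne.symm hav) (Ne.symm hcv) hac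
      have iad := hinj v a d (Ne.symm hav) (Ne.symm hdv) had
      have ibc := hinj v b c (Ne.symm hbv) (Ne.symm hcv) hbc
      have ibd := hinj v b d (Ne.symm hbv) (Ne.symm hdv) hbd
      have icd := hinj v c d (Ne.symm hcv) (Ne.symm hdv) hcd
      omega
    set f : Fin 5 → Fin 5 := fun v => Classical.choose (hex v) with hf
    have hfspec : ∀ v, f v ≠ v ∧ γ' v (f v) = 1 := fun v => Classical.choose_spec (hex v)
    have hinvol : ∀ v, f (f v) = v := by
      intro v
      by_contra hne
      have h1 : γ' (f v) (f (f v)) = 1 := (hfspec (f v)).2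
      have h2 : γ' (f v) v = 1 := by
        rw [← hsym' v (f v) (Ne.symm (hfspec v).1)]
        exact (hfspec v).2
      exact hinj (f v) (f (f v)) v (Ne.symm (hfspec (f v)).1) ((hfspec v).1)
        hne (h1.trans h2.symm)
    exact aux_no_invol f hinvol (fun v => (hfspec v).1)
end

section
/- For a signature σ on the complete graph K₅, χ'(K₅,σ) = 4 if and only if the edge set of K₅ can be partitioned into two Hamiltonian cycles each of which is positive in (K₅,σ); otherwise χ'(K₅,σ) = 5. -/
open scoped Classical

/-!
In a proper 4-colouring of `K₅` every vertex sees each of the colours `±1, ±2` exactly once, so the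
edges coloured `±1` and those coloured `±2` form two 2-factors. On five vertices a 2-factor is a
Hamiltonian cycle (a 2-regular graph has components of size at least three), and the complement of
a pentagon is the pentagram. Along such a cycle `v₀ v₁ …` the colour of `(vᵢ₊₁, vᵢ₊₁vᵢ₊₂)` is
`σ(vᵢvᵢ₊₁)` times the colour of `(vᵢ, vᵢvᵢ₊₁)`; going once around shows that the cycle is positive.
Conversely a positive cycle is coloured `±k` by transporting a colour around it. Five colours always
suffice: flipping one pentagon edge and one disjoint pentagram edge makes both cycles positive;
colour the result with `±1, ±2` and recolour these two edges with `0`. At least four colours are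
needed since every vertex has degree four.
-/

lemma colorSet_subset_Icc (q : ℕ) :
    colorSet q ⊆ ↑((Finset.Icc (-(q / 2 : ℕ) : ℤ) (q / 2 : ℕ)).filter fun c => Even q → c ≠ 0) := by
  intro c ⟨hc, h0⟩
  simp only [Finset.coe_filter, Finset.mem_Icc, Set.mem_ofPred_eq]
  exact ⟨by omega, h0⟩

lemma finite_colorSet (q : ℕ) : (colorSet q).Finite :=
  (Finset.finite_toSet _).subset (colorSet_subset_Icc q)

lemma ncard_colorSet_le (q : ℕ) : (colorSet q).ncard ≤ q := by
  refine (Set.ncard_le_ncard (colorSet_subset_Icc q) (Finset.finite_toSet _)).trans ?_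
  rw [Set.ncard_coe_finset]
  rcases Nat.even_or_odd q with hq | hq
  · have : ((Finset.Icc (-(q / 2 : ℕ) : ℤ) (q / 2 : ℕ)).filter fun c => Even q → c ≠ 0) =
        (Finset.Icc (-(q / 2 : ℕ) : ℤ) (q / 2 : ℕ)).erase 0 := by
      ext c; simp [hq, and_comm]
    rw [this, Finset.card_erase_of_mem (by rw [Finset.mem_Icc]; omega), Int.card_Icc]
    obtain ⟨r, rfl⟩ := hq
    omega
  · refine (Finset.card_filter_le _ _).trans ?_
    rw [Int.card_Icc]
    obtain ⟨r, rfl⟩ := hq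
    omega

lemma mem_colorSet_four {c : ℤ} : c ∈ colorSet 4 ↔ c.natAbs = 1 ∨ c.natAbs = 2 := by
  simp only [colorSet, Set.mem_ofPred_eq]
  constructor
  · rintro ⟨h, h0⟩; have := h0 (by decide); omega
  · rintro (h | h) <;> exact ⟨by omega, fun _ => by omega⟩

namespace Fin

variable {n : ℕ} [NeZero n]

lemma prod_eq_one_of_add_eq_mul {M : Type*} [CommRing M] [IsDomain M] {f t : Fin n → M}
    (d : Fin n) (ht : ∀ i, t i ≠ 0) (h : ∀ i, t (i + d) = f i * t i) : ∏ i, f i = 1 := by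
  have hshift : ∏ i, t (i + d) = ∏ i, t i := Fintype.prod_equiv (Equiv.addRight d) _ _ fun _ => rfl
  simp only [h, Finset.prod_mul_distrib] at hshift
  exact mul_left_cancel₀ (Finset.prod_ne_zero_iff.mpr fun i _ => ht i)
    ((mul_comm _ _).trans (hshift.trans (mul_one _).symm))

lemma exists_add_one_eq_mul_of_prod_eq_one {M : Type*} [CommMonoid M] {f : Fin n → M}
    (hf : ∏ i, f i = 1) : ∃ t : Fin n → M, ∀ i, t (i + 1) = f i * t i := by
  let f' : ℕ → M := fun j => if h : j < n then f ⟨j, h⟩ else 1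
  refine ⟨fun i => ∏ j ∈ Finset.range i, f' j, fun i => ?_⟩
  have hi : f' i = f i := dif_pos i.isLt
  dsimp only
  rcases Nat.lt_or_eq_of_le (show (i : ℕ) + 1 ≤ n from i.isLt) with hlt | hlast
  · rw [Fin.val_add_one_of_lt' hlt, Finset.prod_range_succ, hi, mul_comm]
  · have hwrap : ((i + 1 : Fin n) : ℕ) = 0 := by
      rw [Fin.val_add, Fin.val_one', Nat.add_mod_mod, hlast, Nat.mod_self]
    rw [hwrap, Finset.prod_range_zero, ← hi, mul_comm, ← Finset.prod_range_succ, hlast,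
      ← Fin.prod_univ_eq_prod_range]
    simpa [f'] using hf.symm

end Fin

def colorClassGraph {V : Type*} (G : SimpleGraph V) (γ : V → V → ℤ) (k : ℕ) : SimpleGraph V :=
  SimpleGraph.fromRel fun v w => G.Adj v w ∧ (γ v w).natAbs = k

namespace IsProperSignedEdgeColoring

variable {V : Type*} {G : SimpleGraph V} {σ : Sym2 V → ℤˣ} {q : ℕ} {γ : V → V → ℤ}

lemma natAbs_comm (hγ : IsProperSignedEdgeColoring G σ q γ) {v w : V} (h : G.Adj v w) :
    (γ v w).natAbs = (γ w v).natAbs := by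
  rw [hγ.2.1 h, Int.natAbs_mul, Int.natAbs_neg, Int.natAbs_of_isUnit (σ _).isUnit, one_mul]

lemma eq_neg_of_natAbs_eq (hγ : IsProperSignedEdgeColoring G σ q γ) {v x y : V}
    (hx : G.Adj v x) (hy : G.Adj v y) (hxy : x ≠ y)
    (h : (γ v x).natAbs = (γ v y).natAbs) : γ v y = -γ v x := by
  rcases Int.natAbs_eq_natAbs_iff.mp h with h | h
  · exact absurd h (hγ.2.2 hx hy hxy)
  · rw [h, neg_neg]

lemma ncard_neighborSet_le (hγ : IsProperSignedEdgeColoring G σ q γ) (v : V) :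
    (G.neighborSet v).ncard ≤ q :=
  (Set.ncard_le_ncard_of_injOn (γ v) (fun _ hw => hγ.1 hw)
    (fun _ hx _ hy hxy => by_contra fun h => hγ.2.2 hx hy h hxy) (finite_colorSet q)).trans
    (ncard_colorSet_le q)

lemma comap {W : Type*} {G' : SimpleGraph W} {σ' : Sym2 W → ℤˣ} {γ' : W → W → ℤ} (f : G ↪g G')
    (hγ : IsProperSignedEdgeColoring G' σ' q γ') :
    IsProperSignedEdgeColoring G (σ' ∘ Sym2.map ⇑f) q fun v w => γ' (f v) (f w) :=
  ⟨fun _ _ h => hγ.1 (f.map_rel_iff.mpr h), fun _ _ h => hγ.2.1 (f.map_rel_iff.mpr h),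
    fun _ _ _ h₁ h₂ hne => hγ.2.2 (f.map_rel_iff.mpr h₁) (f.map_rel_iff.mpr h₂)
      (f.injective.ne hne)⟩

lemma zero_on_matching {σ' : Sym2 V → ℤˣ} {r : ℕ} (hγ : IsProperSignedEdgeColoring G σ' (2 * r) γ)
    {M : Set (Sym2 V)} (hM : ∀ ⦃v w₁ w₂ : V⦄, s(v, w₁) ∈ M → s(v, w₂) ∈ M → w₁ = w₂)
    (hσ : ∀ e ∉ M, σ e = σ' e) :
    IsProperSignedEdgeColoring G σ (2 * r + 1) fun v w => if s(v, w) ∈ M then 0 else γ v w := by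
  have hodd : ¬Even (2 * r + 1) := Nat.not_even_iff_odd.mpr (odd_two_mul_add_one r)
  refine ⟨fun v w h => ?_, fun v w h => ?_, fun v w₁ w₂ h₁ h₂ hne => ?_⟩ <;> dsimp only
  · split_ifs
    · exact ⟨by simp, fun h => absurd h hodd⟩
    · exact ⟨by have := (hγ.1 h).1; omega, fun h => absurd h hodd⟩
  · rw [Sym2.eq_swap (a := w)]
    split_ifs with hM'
    · simp
    · rw [hσ _ hM']; exact hγ.2.1 h
  · have hne0 : ∀ w, G.Adj v w → γ v w ≠ 0 := fun w h => (hγ.1 h).2 (even_two_mul r)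
    split_ifs with hM₁ hM₂ hM₂
    · exact absurd (hM hM₁ hM₂) hne
    · exact (hne0 w₂ h₂).symm
    · exact hne0 w₁ h₁
    · exact hγ.2.2 h₁ h₂ hne

lemma prod_eq_one_of_natAbs_eq (hγ : IsProperSignedEdgeColoring G σ q γ) {n : ℕ} [NeZero n]
    (a : Fin n → V) (d : Fin n) (hadj : ∀ i, G.Adj (a i) (a (i + d)))
    (hback : ∀ i, a (i + d + d) ≠ a i) {k : ℕ} (hk : k ≠ 0)
    (habs : ∀ i, (γ (a i) (a (i + d))).natAbs = k) : ∏ i, σ s(a i, a (i + d)) = 1 := by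
  -- At `a (i + d)` the two incidences of absolute value `k` carry opposite colours.
  have step : ∀ i, γ (a (i + d)) (a (i + d + d)) = σ s(a i, a (i + d)) * γ (a i) (a (i + d)) := by
    intro i
    rw [hγ.eq_neg_of_natAbs_eq (hadj i).symm (hadj (i + d)) (hback i).symm
      (by rw [habs, ← hγ.natAbs_comm (hadj i), habs]), hγ.2.1 (hadj i).symm, Sym2.eq_swap]
    ring
  refine Units.ext ?_
  rw [Units.coe_prod, Units.val_one]
  exact Fin.prod_eq_one_of_add_eq_mul (t := fun i => γ (a i) (a (i + d))) d
    (fun i h => hk (by rw [← habs i, h, Int.natAbs_zero])) step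

lemma colorClassGraph_adj (hγ : IsProperSignedEdgeColoring G σ q γ) {k : ℕ} {v w : V} :
    (colorClassGraph G γ k).Adj v w ↔ G.Adj v w ∧ (γ v w).natAbs = k := by
  rw [colorClassGraph, SimpleGraph.fromRel_adj]
  constructor
  · rintro ⟨-, h | ⟨h, hk⟩⟩
    exacts [h, ⟨h.symm, hγ.natAbs_comm h ▸ hk⟩]
  · exact fun h => ⟨G.ne_of_adj h.1, Or.inl h⟩

lemma ncard_neighborSet_colorClassGraph_le_two (hγ : IsProperSignedEdgeColoring G σ q γ)
    (k : ℕ) (v : V) : ((colorClassGraph G γ k).neighborSet v).ncard ≤ 2 := by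
  refine (Set.ncard_le_ncard_of_injOn (γ v) (t := {(k : ℤ), -(k : ℤ)}) (fun w hw => ?_)
    (fun x hx y hy hxy => by_contra fun h => ?_)).trans
    ((Set.ncard_insert_le _ _).trans (by rw [Set.ncard_singleton]))
  · have := (hγ.colorClassGraph_adj.mp hw).2
    simp only [Set.mem_insert_iff, Set.mem_singleton_iff]
    omega
  · exact hγ.2.2 (hγ.colorClassGraph_adj.mp hx).1 (hγ.colorClassGraph_adj.mp hy).1 h hxy

lemma ncard_neighborSet_colorClassGraph_eq_two (hγ : IsProperSignedEdgeColoring G σ 4 γ)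
    {v : V} (hv : (G.neighborSet v).ncard = 4) {k : ℕ} (hk : k = 1 ∨ k = 2) :
    ((colorClassGraph G γ k).neighborSet v).ncard = 2 := by
  have hsplit : G.neighborSet v =
      (colorClassGraph G γ 1).neighborSet v ∪ (colorClassGraph G γ 2).neighborSet v := by
    ext w
    simp only [Set.mem_union, SimpleGraph.mem_neighborSet, hγ.colorClassGraph_adj]
    exact ⟨fun h => (mem_colorSet_four.mp (hγ.1 h)).imp (⟨h, ·⟩) (⟨h, ·⟩),
      fun h => h.elim (·.1) (·.1)⟩
  have hdisj : Disjoint ((colorClassGraph G γ 1).neighborSet v)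
      ((colorClassGraph G γ 2).neighborSet v) :=
    Set.disjoint_left.mpr fun w h₁ h₂ => by
      have := (hγ.colorClassGraph_adj.mp h₁).2
      have := (hγ.colorClassGraph_adj.mp h₂).2
      omega
  have := hγ.ncard_neighborSet_colorClassGraph_le_two 1 v
  have := hγ.ncard_neighborSet_colorClassGraph_le_two 2 v
  have hfin : (G.neighborSet v).Finite := Set.finite_of_ncard_ne_zero (by rw [hv]; norm_num)
  have hsum := Set.ncard_union_eq hdisj (hfin.subset (hsplit ▸ Set.subset_union_left))
    (hfin.subset (hsplit ▸ Set.subset_union_right))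
  rw [← hsplit, hv] at hsum
  rcases hk with rfl | rfl <;> omega

end IsProperSignedEdgeColoring

lemma signedChromaticIndex_le {V : Type*} {G : SimpleGraph V} {σ : Sym2 V → ℤˣ} {q : ℕ}
    {γ : V → V → ℤ} (hγ : IsProperSignedEdgeColoring G σ q γ) : signedChromaticIndex G σ ≤ q :=
  Nat.sInf_le ⟨γ, hγ⟩

lemma exists_proper_signedChromaticIndex {V : Type*} {G : SimpleGraph V} {σ : Sym2 V → ℤˣ}
    {q : ℕ} {γ : V → V → ℤ} (hγ : IsProperSignedEdgeColoring G σ q γ) :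
    ∃ γ', IsProperSignedEdgeColoring G σ (signedChromaticIndex G σ) γ' :=
  Nat.sInf_mem (⟨q, γ, hγ⟩ : {q | ∃ γ, IsProperSignedEdgeColoring G σ q γ}.Nonempty)

lemma injective_sym2_mk_add {V : Type*} {a : Fin 5 → V} (ha : Function.Injective a) {d : Fin 5}
    (hd : d + d ≠ 0) : Function.Injective fun i => s(a i, a (i + d)) := by
  intro i j h
  rcases Sym2.eq_iff.mp h with ⟨hij, -⟩ | ⟨hij, hji⟩
  · exact ha hij
  · have hij := ha hij
    have hji := ha hji
    subst hij
    exact absurd (by rw [add_assoc] at hji; simpa using hji) hd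

lemma mem_ofFn_sym2_iff {V : Type*} {a : Fin 5 → V} (ha : Function.Injective a) (d i j : Fin 5) :
    s(a i, a j) ∈ List.ofFn (fun k => s(a k, a (k + d))) ↔ j = i + d ∨ i = j + d := by
  simp only [List.mem_ofFn, Sym2.eq_iff, ha.eq_iff]
  constructor
  · rintro ⟨k, ⟨rfl, rfl⟩ | ⟨rfl, rfl⟩⟩ <;> simp
  · rintro (rfl | rfl)
    exacts [⟨i, Or.inl ⟨rfl, rfl⟩⟩, ⟨j, Or.inr ⟨rfl, rfl⟩⟩]

namespace SimpleGraph

variable {V : Type*} {H : SimpleGraph V}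

lemma ncard_neighborSet_top [Fintype V] (v : V) :
    ((⊤ : SimpleGraph V).neighborSet v).ncard = Fintype.card V - 1 := by
  rw [neighborSet_top, Set.ncard_compl, Set.ncard_singleton, Nat.card_eq_fintype_card]

lemma eq_or_eq_of_ncard_neighborSet_le_two [Finite V] {v x y z : V}
    (hv : (H.neighborSet v).ncard ≤ 2) (hx : H.Adj v x) (hy : H.Adj v y) (hz : H.Adj v z)
    (hxy : x ≠ y) : z = x ∨ z = y := by
  by_contra! h
  have hsub : ({x, y, z} : Set V) ⊆ H.neighborSet v := by
    rintro w (rfl | rfl | rfl) <;> assumption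
  have := Set.ncard_le_ncard hsub
  rw [Set.ncard_eq_three.mpr ⟨x, y, z, hxy, h.1.symm, h.2.symm, rfl⟩] at this
  omega

lemma IsCycles.three_le_ncard_supp [Finite V] (hH : H.IsCycles) {v : V}
    (hv : (H.neighborSet v).Nonempty) : 3 ≤ (H.connectedComponentMk v).supp.ncard := by
  obtain ⟨p, hp, hverts⟩ :=
    hH.exists_cycle_toSubgraph_verts_eq_connectedComponentSupp (c := H.connectedComponentMk v) rfl hv
  have hsub : ↑p.support.tail.toFinset ⊆ (H.connectedComponentMk v).supp := fun x hx => by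
    rw [← hverts, Walk.mem_verts_toSubgraph]
    exact List.mem_of_mem_tail (List.mem_toFinset.mp hx)
  calc 3 ≤ p.length := hp.three_le_length
    _ = p.support.tail.toFinset.card := by
      rw [List.toFinset_card_of_nodup hp.support_nodup, List.length_tail, Walk.length_support,
        Nat.add_sub_cancel]
    _ ≤ _ := by rw [← Set.ncard_coe_finset]; exact Set.ncard_le_ncard hsub

lemma connected_of_ncard_neighborSet_eq_two [Fintype V] [Nonempty V] (hV : Fintype.card V < 6)
    (hH : ∀ v, (H.neighborSet v).ncard = 2) : H.Connected := by
  have hcyc : H.IsCycles := fun v _ => hH v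
  have hnonempty : ∀ v, (H.neighborSet v).Nonempty := fun v =>
    Set.nonempty_of_ncard_ne_zero (by rw [hH v]; norm_num)
  let v := Classical.arbitrary V
  refine (connected_iff_exists_forall_reachable H).mpr ⟨v, fun u => ?_⟩
  by_contra hreach
  have hdisj : Disjoint (H.connectedComponentMk v).supp (H.connectedComponentMk u).supp :=
    Set.disjoint_left.mpr fun x hx hx' => hreach (ConnectedComponent.exact (hx.symm.trans hx'))
  have hunion := Set.ncard_union_eq hdisj
  have huniv := Set.ncard_le_ncard
    (Set.subset_univ ((H.connectedComponentMk v).supp ∪ (H.connectedComponentMk u).supp))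
  rw [Set.ncard_univ, Nat.card_eq_fintype_card] at huniv
  have := hcyc.three_le_ncard_supp (hnonempty v)
  have := hcyc.three_le_ncard_supp (hnonempty u)
  omega

def pentagonWalk (a : Fin 5 → V) (ha : Function.Injective a) :
    (⊤ : SimpleGraph V).Walk (a 0) (a 0) :=
  .cons (ha.ne (by decide : (0 : Fin 5) ≠ 1)) <| .cons (ha.ne (by decide : (1 : Fin 5) ≠ 2)) <|
    .cons (ha.ne (by decide : (2 : Fin 5) ≠ 3)) <| .cons (ha.ne (by decide : (3 : Fin 5) ≠ 4)) <|
    .cons (ha.ne (by decide : (4 : Fin 5) ≠ 0)) .nil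

lemma pentagonWalk_edges (a : Fin 5 → V) (ha : Function.Injective a) :
    (pentagonWalk a ha).edges = List.ofFn fun i => s(a i, a (i + 1)) := rfl

lemma pentagonWalk_isCycle (a : Fin 5 → V) (ha : Function.Injective a) :
    (pentagonWalk a ha).IsCycle := by
  refine (Walk.isCycle_def _).mpr ⟨⟨?_⟩, by simp [pentagonWalk], ?_⟩
  · rw [pentagonWalk_edges, List.nodup_ofFn]
    exact injective_sym2_mk_add ha (by decide)
  · have : (pentagonWalk a ha).support.tail = List.ofFn fun i => a (i + 1) := rfl
    rw [this, List.nodup_ofFn]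
    exact ha.comp (add_left_injective 1)

lemma exists_injective_of_isCycle_of_length_eq_five {u : V} {w : H.Walk u u} (hw : w.IsCycle)
    (hlen : w.length = 5) :
    ∃ a : Fin 5 → V, Function.Injective a ∧ (∀ i, H.Adj (a i) (a (i + 1))) ∧
      w.edges = List.ofFn fun i => s(a i, a (i + 1)) := by
  rcases w with _ | ⟨h₀, _ | ⟨h₁, _ | ⟨h₂, _ | ⟨h₃, _ | ⟨h₄, _ | ⟨_, p⟩⟩⟩⟩⟩⟩ <;>
    simp only [Walk.length_cons, Walk.length_nil] at hlen <;> try omega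
  rename_i x₁ x₂ x₃ x₄
  refine ⟨![u, x₁, x₂, x₃, x₄], ?_, ?_, rfl⟩
  · rw [← List.nodup_ofFn, ← List.nodup_rotate (n := 1)]
    exact hw.support_nodup
  · intro i
    fin_cases i
    exacts [h₀, h₁, h₂, h₃, h₄]

lemma exists_pentagon_of_ncard_neighborSet_eq_two (H : SimpleGraph (Fin 5))
    (hH : ∀ v, (H.neighborSet v).ncard = 2) :
    ∃ a : Fin 5 → Fin 5, Function.Injective a ∧ ∀ i, H.Adj (a i) (a (i + 1)) := by
  have hconn := connected_of_ncard_neighborSet_eq_two (by simp) hH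
  obtain ⟨p, hp, hverts⟩ := IsCycles.exists_cycle_toSubgraph_verts_eq_connectedComponentSupp
    (c := H.connectedComponentMk 0) (fun v _ => hH v) rfl
    (Set.nonempty_of_ncard_ne_zero (by rw [hH 0]; norm_num))
  have htail : ∀ x, x ∈ p.support.tail := fun x => by
    have hx : x ∈ p.toSubgraph.verts := hverts ▸ ConnectedComponent.eq.mpr (hconn x 0)
    rcases (Walk.mem_support_iff p).mp ((Walk.mem_verts_toSubgraph p).mp hx) with rfl | hx
    exacts [Walk.end_mem_tail_support hp.not_nil, hx]
  have hham : p.IsHamiltonianCycle :=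
    Walk.isHamiltonianCycle_iff_isCycle_and_support_count_tail_eq_one.mpr
      ⟨hp, fun x => List.count_eq_one_of_mem hp.support_nodup (htail x)⟩
  obtain ⟨a, ha, hadj, -⟩ := exists_injective_of_isCycle_of_length_eq_five hp
    (by rw [hham.length_eq, Fintype.card_fin])
  exact ⟨a, ha, hadj⟩

end SimpleGraph

open SimpleGraph

/-- Listing the vertices of `K₅` as `a 0, …, a 4`, both the pentagon `a 0 a 1 a 2 a 3 a 4` and
the complementary pentagram `a 0 a 2 a 4 a 1 a 3` are positive. -/
def IsPositivePentagonPair (σ : Sym2 (Fin 5) → ℤˣ) (a : Fin 5 → Fin 5) : Prop :=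
  ∏ i, σ s(a i, a (i + 1)) = 1 ∧ ∏ i, σ s(a i, a (i + 2)) = 1

/-- Colours `±t₁ i` on the pentagon edges at `i` and `±2 t₂ i` on the pentagram edges at `i`,
read off from the offset `j - i`. -/
def pentagonColoring (t₁ t₂ : Fin 5 → ℤ) (i j : Fin 5) : ℤ :=
  ![0, t₁ i, 2 * t₂ i, -(2 * t₂ i), -t₁ i] (j - i)

lemma exists_add_eq_of_ne {G : Type*} [AddCommGroup G] {i j : G} (h : i ≠ j) :
    ∃ k ≠ 0, j = i + k :=
  ⟨j - i, sub_ne_zero.mpr h.symm, (add_sub_cancel i j).symm⟩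

lemma Int.units_eq_mul_of_eq_mul {u v w : ℤˣ} (h : u = v * w) : w = v * u := by
  rw [h, ← mul_assoc, Int.units_mul_self, one_mul]

lemma isProper_pentagonColoring (σ : Sym2 (Fin 5) → ℤˣ) (t₁ t₂ : Fin 5 → ℤˣ)
    (h₁ : ∀ i, t₁ (i + 1) = σ s(i, i + 1) * t₁ i) (h₂ : ∀ i, t₂ (i + 2) = σ s(i, i + 2) * t₂ i) :
    IsProperSignedEdgeColoring ⊤ σ 4 (pentagonColoring (fun i => t₁ i) (fun i => t₂ i)) := by
  refine ⟨fun i j h => ?_, fun i j h => ?_, fun i j₁ j₂ h₁ h₂ hne => ?_⟩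
  · obtain ⟨k, hk, rfl⟩ := exists_add_eq_of_ne h
    rw [mem_colorSet_four]
    fin_cases k <;> simp [pentagonColoring, Int.natAbs_mul] at hk ⊢
  · obtain ⟨k, hk, rfl⟩ := exists_add_eq_of_ne h
    fin_cases k <;>
      simp only [pentagonColoring, Fin.isValue, Fin.zero_eta, Fin.mk_one, Fin.reduceFinMk, ne_eq,
        not_true_eq_false, add_sub_cancel_left, sub_add_cancel_left, Matrix.cons_val,
        Matrix.cons_val_one, Matrix.cons_val_zero, mul_neg, neg_mul, neg_neg, neg_inj] at hk ⊢
    · exact_mod_cast Int.units_eq_mul_of_eq_mul (h₁ i)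
    · rw [Int.units_eq_mul_of_eq_mul (h₂ i), Units.val_mul]; ring
    · have := h₂ (i + 3)
      rw [add_assoc, show (3 + 2 : Fin 5) = 0 from rfl, add_zero, Sym2.eq_swap] at this
      rw [this, Units.val_mul]; ring
    · have := h₁ (i + 4)
      rw [add_assoc, show (4 + 1 : Fin 5) = 0 from rfl, add_zero, Sym2.eq_swap] at this
      exact_mod_cast this
  · obtain ⟨k₁, hk₁, rfl⟩ := exists_add_eq_of_ne h₁
    obtain ⟨k₂, hk₂, rfl⟩ := exists_add_eq_of_ne h₂
    have := Int.natAbs_of_isUnit (t₁ i).isUnit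
    have := Int.natAbs_of_isUnit (t₂ i).isUnit
    fin_cases k₁ <;> fin_cases k₂ <;> simp [pentagonColoring] at hk₁ hk₂ hne ⊢ <;> omega

lemma exists_proper_four_of_isPositivePentagonPair {σ : Sym2 (Fin 5) → ℤˣ} (a : Equiv.Perm (Fin 5))
    (ha : IsPositivePentagonPair σ a) : ∃ γ, IsProperSignedEdgeColoring ⊤ σ 4 γ := by
  set σ' := σ ∘ Sym2.map a
  obtain ⟨t₁, ht₁⟩ := Fin.exists_add_one_eq_mul_of_prod_eq_one (f := fun i => σ' s(i, i + 1)) ha.1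
  -- The pentagram is the cycle `j ↦ 2 * j`; as `3 * 2 = 1` in `Fin 5`, its transport is read
  -- back at `3 * i`.
  have hstar : ∏ j, σ' s(2 * j, 2 * j + 2) = 1 := by
    rw [← ha.2]
    exact Fintype.prod_bijective (2 * ·) (by decide) _ _ fun j => by simp [σ', Sym2.map_mk]
  obtain ⟨u, hu⟩ := Fin.exists_add_one_eq_mul_of_prod_eq_one hstar
  have ht₂ : ∀ i, u (3 * (i + 2)) = σ' s(i, i + 2) * u (3 * i) := fun i => by
    have hthree : ∀ i : Fin 5, 3 * (i + 2) = 3 * i + 1 ∧ 2 * (3 * i) = i := by decide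
    rw [(hthree i).1, hu, (hthree i).2]
  refine ⟨fun v w => pentagonColoring (fun i => t₁ i) (fun i => u (3 * i)) (a.symm v) (a.symm w),
    ?_⟩
  have hσ : σ = σ' ∘ Sym2.map a.symm := by
    funext e; simp [σ', Sym2.map_map]
  rw [hσ]
  exact (isProper_pentagonColoring σ' t₁ _ ht₁ ht₂).comap
    (Embedding.completeGraph a.symm.toEmbedding)

lemma exists_proper_five (σ : Sym2 (Fin 5) → ℤˣ) : ∃ γ, IsProperSignedEdgeColoring ⊤ σ 5 γ := by
  set π₁ := ∏ i : Fin 5, σ s(i, i + 1)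
  set π₂ := ∏ i : Fin 5, σ s(i, i + 2)
  let M : Set (Sym2 (Fin 5)) := {s(4, 0), s(1, 3)}
  let τ : Sym2 (Fin 5) → ℤˣ := fun e => if e = s(4, 0) then π₁ else if e = s(1, 3) then π₂ else 1
  have hpos : IsPositivePentagonPair (σ * τ) (Equiv.refl _) := by
    simp only [IsPositivePentagonPair, Equiv.refl_apply, Pi.mul_apply, Finset.prod_mul_distrib]
    constructor
    · rw [show ∏ i : Fin 5, τ s(i, i + 1) = π₁ by simp [τ, Fin.prod_univ_five]]
      exact Int.units_mul_self π₁
    · rw [show ∏ i : Fin 5, τ s(i, i + 2) = π₂ by simp [τ, Fin.prod_univ_five]]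
      exact Int.units_mul_self π₂
  obtain ⟨γ, hγ⟩ := exists_proper_four_of_isPositivePentagonPair _ hpos
  refine ⟨_, hγ.zero_on_matching (r := 2) (M := M) ?_ ?_⟩
  · intro v w₁ w₂ h₁ h₂
    simp only [M, Set.mem_insert_iff, Set.mem_singleton_iff] at h₁ h₂
    revert v w₁ w₂; decide
  · intro e he
    simp only [M, Set.mem_insert_iff, Set.mem_singleton_iff, not_or] at he
    simp [τ, he.1, he.2]

lemma exists_isPositivePentagonPair_of_proper_four {σ : Sym2 (Fin 5) → ℤˣ} {γ : Fin 5 → Fin 5 → ℤ}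
    (hγ : IsProperSignedEdgeColoring ⊤ σ 4 γ) :
    ∃ a : Equiv.Perm (Fin 5), IsPositivePentagonPair σ a := by
  obtain ⟨a, ha, hadj⟩ := (colorClassGraph ⊤ γ 1).exists_pentagon_of_ncard_neighborSet_eq_two
    fun v => hγ.ncard_neighborSet_colorClassGraph_eq_two (ncard_neighborSet_top v) (Or.inl rfl)
  have htop : ∀ d : Fin 5, d ≠ 0 → ∀ i, (⊤ : SimpleGraph (Fin 5)).Adj (a i) (a (i + d)) :=
    fun d hd i => ha.ne fun h => hd (by simpa using h.symm)
  have habs₁ : ∀ i, (γ (a i) (a (i + 1))).natAbs = 1 := fun i =>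
    (hγ.colorClassGraph_adj.mp (hadj i)).2
  -- The colour-`1` neighbours of `a i` are `a (i + 1)` and `a (i - 1)`, so the pentagram edges
  -- carry colours `±2`.
  have habs₂ : ∀ i, (γ (a i) (a (i + 2))).natAbs = 2 := fun i => by
    refine (mem_colorSet_four.mp (hγ.1 (htop 2 (by decide) i))).resolve_left fun h => ?_
    have hprev : (colorClassGraph ⊤ γ 1).Adj (a i) (a (i + 4)) := by
      simpa [add_assoc] using (hadj (i + 4)).symm
    rcases eq_or_eq_of_ncard_neighborSet_le_two
      (hγ.ncard_neighborSet_colorClassGraph_le_two 1 (a i)) (hadj i) hprev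
      (hγ.colorClassGraph_adj.mpr ⟨htop 2 (by decide) i, h⟩) (ha.ne (by simp)) with h | h <;>
      exact absurd (ha h) (by simp)
  refine ⟨Equiv.ofBijective a (Finite.injective_iff_bijective.mp ha), ?_, ?_⟩
  · exact hγ.prod_eq_one_of_natAbs_eq a 1 (htop 1 one_ne_zero)
      (fun i => ha.ne (by simp [add_assoc])) one_ne_zero habs₁
  · exact hγ.prod_eq_one_of_natAbs_eq a 2 (htop 2 (by decide))
      (fun i => ha.ne (by simp [add_assoc])) two_ne_zero habs₂

lemma fin_five_add_one_iff_not_add_two :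
    ∀ i j : Fin 5, i ≠ j → ((j = i + 1 ∨ i = j + 1) ↔ ¬(j = i + 2 ∨ i = j + 2)) := by
  decide

def HasPositiveHamiltonianDecomposition (σ : Sym2 (Fin 5) → ℤˣ) : Prop :=
  ∃ (v₁ v₂ : Fin 5) (w₁ : (⊤ : SimpleGraph (Fin 5)).Walk v₁ v₁)
    (w₂ : (⊤ : SimpleGraph (Fin 5)).Walk v₂ v₂),
    w₁.IsCycle ∧ w₂.IsCycle ∧ w₁.length = 5 ∧ w₂.length = 5 ∧
    (w₁.edges.map σ).prod = 1 ∧ (w₂.edges.map σ).prod = 1 ∧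
    (∀ e ∈ (⊤ : SimpleGraph (Fin 5)).edgeSet, e ∈ w₁.edges ∨ e ∈ w₂.edges) ∧
    (∀ e : Sym2 (Fin 5), ¬(e ∈ w₁.edges ∧ e ∈ w₂.edges))

lemma HasPositiveHamiltonianDecomposition.exists_isPositivePentagonPair
    {σ : Sym2 (Fin 5) → ℤˣ} (h : HasPositiveHamiltonianDecomposition σ) :
    ∃ a : Equiv.Perm (Fin 5), IsPositivePentagonPair σ a := by
  obtain ⟨v₁, v₂, w₁, w₂, hc₁, hc₂, hl₁, -, hp₁, hp₂, hcov, hdisj⟩ := h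
  obtain ⟨a, ha, -, he₁⟩ := exists_injective_of_isCycle_of_length_eq_five hc₁ hl₁
  have hsurj := Finite.injective_iff_surjective.mp ha
  -- The second cycle runs through the complement of the first one, which is the pentagram.
  have hperm : (List.ofFn fun i => s(a i, a (i + 2))).Perm w₂.edges := by
    refine (List.perm_ext_iff_of_nodup (List.nodup_ofFn.mpr (injective_sym2_mk_add ha (by decide)))
      hc₂.edges_nodup).mpr fun e => ?_
    induction e using Sym2.ind with | _ x y => ?_
    obtain ⟨i, rfl⟩ := hsurj x
    obtain ⟨j, rfl⟩ := hsurj y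
    have hw₁ := he₁ ▸ mem_ofFn_sym2_iff ha 1 i j
    rw [mem_ofFn_sym2_iff ha]
    constructor
    · intro hij
      have hne : i ≠ j := by rintro rfl; omega
      refine (hcov _ (ha.ne hne)).resolve_left fun h => ?_
      exact (fin_five_add_one_iff_not_add_two i j hne).mp (hw₁.mp h) hij
    · intro hmem
      have hne : i ≠ j := fun hij => Walk.edges_subset_edgeSet _ hmem (congrArg a hij)
      by_contra hstar
      exact hdisj _ ⟨hw₁.mpr ((fin_five_add_one_iff_not_add_two i j hne).mpr hstar), hmem⟩
  refine ⟨Equiv.ofBijective a ⟨ha, hsurj⟩, ?_, ?_⟩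
  · rwa [he₁, List.map_ofFn, List.prod_ofFn] at hp₁
  · rw [← hp₂, ← (hperm.map σ).prod_eq, List.map_ofFn, List.prod_ofFn]
    rfl

lemma hasPositiveHamiltonianDecomposition_of_isPositivePentagonPair {σ : Sym2 (Fin 5) → ℤˣ}
    (a : Equiv.Perm (Fin 5)) (h : IsPositivePentagonPair σ a) :
    HasPositiveHamiltonianDecomposition σ := by
  have hdouble : Function.Injective fun i : Fin 5 => 2 * i := by decide
  have hb : Function.Injective (a ∘ (2 * ·)) := a.injective.comp hdouble
  have mem₁ : ∀ i j, s(a i, a j) ∈ (pentagonWalk a a.injective).edges ↔ j = i + 1 ∨ i = j + 1 :=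
    mem_ofFn_sym2_iff a.injective 1
  have mem₂ : ∀ i j, s(a i, a j) ∈ (pentagonWalk _ hb).edges ↔ j = i + 2 ∨ i = j + 2 := by
    intro i j
    have hthird : ∀ i : Fin 5, 2 * (3 * i) = i := by decide
    have hstep : ∀ i j : Fin 5, 3 * j = 3 * i + 1 ↔ j = i + 2 := by decide
    conv_lhs => rw [← hthird i, ← hthird j]
    rw [pentagonWalk_edges]
    exact (mem_ofFn_sym2_iff hb 1 (3 * i) (3 * j)).trans (or_congr (hstep i j) (hstep j i))
  have hne : ∀ ⦃i j⦄, (⊤ : SimpleGraph (Fin 5)).Adj (a i) (a j) → i ≠ j :=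
    fun i j hij h => hij (congrArg a h)
  refine ⟨_, _, pentagonWalk a a.injective, pentagonWalk _ hb, pentagonWalk_isCycle _ _,
    pentagonWalk_isCycle _ _, rfl, rfl, ?_, ?_, fun e he => ?_, fun e ⟨he₁, he₂⟩ => ?_⟩
  · rw [pentagonWalk_edges, List.map_ofFn, List.prod_ofFn]
    exact h.1
  · rw [pentagonWalk_edges, List.map_ofFn, List.prod_ofFn, ← h.2]
    exact Fintype.prod_bijective _ hdouble.bijective_of_finite _ _ fun i => by simp [mul_add]
  all_goals
    induction e using Sym2.ind with | _ x y => ?_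
    obtain ⟨i, rfl⟩ := a.surjective x
    obtain ⟨j, rfl⟩ := a.surjective y
  · rw [mem₁, mem₂]
    exact or_iff_not_imp_left.mpr fun h₁ =>
      not_not.mp ((fin_five_add_one_iff_not_add_two i j (hne he)).not.mp h₁)
  · have hij := hne (Walk.edges_subset_edgeSet _ he₁)
    rw [mem₁] at he₁
    rw [mem₂] at he₂
    exact (fin_five_add_one_iff_not_add_two i j hij).mp he₁ he₂

/-- For a signature `σ` on `K₅`, `χ'(K₅, σ) = 4` iff the edge set of
`K₅` can be partitioned into two Hamiltonian cycles both of which are positive in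
`(K₅, σ)`; otherwise `χ'(K₅, σ) = 5`. -/
theorem chromaticIndex_signed_K5_iff (σ : Sym2 (Fin 5) → ℤˣ) :
    (signedChromaticIndex (⊤ : SimpleGraph (Fin 5)) σ = 4 ↔
      ∃ (v₁ v₂ : Fin 5) (w₁ : (⊤ : SimpleGraph (Fin 5)).Walk v₁ v₁)
        (w₂ : (⊤ : SimpleGraph (Fin 5)).Walk v₂ v₂),
        w₁.IsCycle ∧ w₂.IsCycle ∧ w₁.length = 5 ∧ w₂.length = 5 ∧
        (w₁.edges.map σ).prod = 1 ∧ (w₂.edges.map σ).prod = 1 ∧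
        (∀ e ∈ (⊤ : SimpleGraph (Fin 5)).edgeSet, e ∈ w₁.edges ∨ e ∈ w₂.edges) ∧
        (∀ e : Sym2 (Fin 5), ¬(e ∈ w₁.edges ∧ e ∈ w₂.edges))) ∧
    (¬(∃ (v₁ v₂ : Fin 5) (w₁ : (⊤ : SimpleGraph (Fin 5)).Walk v₁ v₁)
        (w₂ : (⊤ : SimpleGraph (Fin 5)).Walk v₂ v₂),
        w₁.IsCycle ∧ w₂.IsCycle ∧ w₁.length = 5 ∧ w₂.length = 5 ∧
        (w₁.edges.map σ).prod = 1 ∧ (w₂.edges.map σ).prod = 1 ∧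
        (∀ e ∈ (⊤ : SimpleGraph (Fin 5)).edgeSet, e ∈ w₁.edges ∨ e ∈ w₂.edges) ∧
        (∀ e : Sym2 (Fin 5), ¬(e ∈ w₁.edges ∧ e ∈ w₂.edges))) →
      signedChromaticIndex (⊤ : SimpleGraph (Fin 5)) σ = 5) := by
  obtain ⟨γ₅, hγ₅⟩ := exists_proper_five σ
  obtain ⟨γ, hγ⟩ := exists_proper_signedChromaticIndex hγ₅
  have hle : signedChromaticIndex ⊤ σ ≤ 5 := signedChromaticIndex_le hγ₅
  have hge : 4 ≤ signedChromaticIndex ⊤ σ := by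
    have := hγ.ncard_neighborSet_le 0
    rwa [ncard_neighborSet_top, Fintype.card_fin] at this
  have key : signedChromaticIndex ⊤ σ = 4 ↔ HasPositiveHamiltonianDecomposition σ := by
    constructor
    · intro h4
      obtain ⟨a, ha⟩ := exists_isPositivePentagonPair_of_proper_four (h4 ▸ hγ)
      exact hasPositiveHamiltonianDecomposition_of_isPositivePentagonPair a ha
    · intro h
      obtain ⟨a, ha⟩ := h.exists_isPositivePentagonPair
      obtain ⟨γ₄, hγ₄⟩ := exists_proper_four_of_isPositivePentagonPair a ha
      exact le_antisymm (signedChromaticIndex_le hγ₄) hge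
  exact ⟨key, fun h => by have := mt key.mp h; omega⟩
end
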